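/- arXiv:1307.5337 — 2 statements merged into one kernel-verified Lean document; each statement's English description precedes it below -/
import Mathlib

section
/- Let T₁ ∈ B(H₁), T₂ ∈ B(H₂) be polynomially bounded operators and X : H₂ → H₁ a bounded operator such that T₁^N X T₂^N = 0 for some integer N ≥ 0. Then the operator R on H₁ ⊕ H₂ given by the 2×2 upper triangular block matrix with diagonal entries T₁, T₂ and upper-right entry X is polynomially bounded. -/
/-- An operator `T` is polynomially bounded if `‖p(T)‖ ≤ C ‖p‖_∞` for all polynomials. -/
def PolynomiallyBounded {E : Type*} [NormedAddCommGroup E] [NormedSpace ℂ E]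
    (T : E →L[ℂ] E) : Prop :=
  ∃ C > (0 : ℝ), ∀ (p : Polynomial ℂ) (B : ℝ),
    (∀ z : ℂ, ‖z‖ ≤ 1 → ‖Polynomial.eval z p‖ ≤ B) →
    ‖(Polynomial.aeval T p : E →L[ℂ] E)‖ ≤ C * B

/-!
For `R = [[T₁, X], [0, T₂]]`, every `p(R)` is again upper triangular with diagonal `p(T₁)`,
`p(T₂)`, and its corner `δ(p)` satisfies the Leibniz rule `δ(pq) = p(T₁) δ(q) + δ(p) q(T₂)`,
`δ(z) = X`. Peeling `N` powers of `z` off `p` on the left, and then `N` more on the right, gives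
`δ(p) = ∑_{j<N} T₁^j X p_{j+1}(T₂) + ∑_{i<N} T₁^N p_{N+i+1}(T₁) X T₂^i + T₁^N δ(p_{2N}) T₂^N`,
where `p_m = divX^[m] p` is `p` with its `m` lowest coefficients dropped, divided by `z^m`.
The last term vanishes because `T₁^N X T₂^N = 0`. On the unit circle
`z^m p_m(z) = p(z) - ∑_{k<m} a_k z^k`, and Cauchy's estimate `|a_k| ≤ ‖p‖_∞` together with the
maximum principle gives `‖p_m‖_∞ ≤ (m + 1) ‖p‖_∞`; so every term is `O(‖p‖_∞)`.
-/

open Polynomial hiding add_comp comp_assoc zero_comp comp_zero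
open Finset hiding mul_def
open ContinuousLinearMap

section Triangular

variable {𝕜 E F : Type*} [NontriviallyNormedField 𝕜]
  [NormedAddCommGroup E] [NormedSpace 𝕜 E] [NormedAddCommGroup F] [NormedSpace 𝕜 F]

def upperTriangular (A : E →L[𝕜] E) (Y : F →L[𝕜] E) (B : F →L[𝕜] F) : E × F →L[𝕜] E × F :=
  (A.comp (fst 𝕜 E F) + Y.comp (snd 𝕜 E F)).prod (B.comp (snd 𝕜 E F))

def upperRight (M : E × F →L[𝕜] E × F) : F →L[𝕜] E :=
  (fst 𝕜 E F).comp (M.comp (inr 𝕜 E F))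

@[simp]
lemma upperTriangular_apply (A : E →L[𝕜] E) (Y : F →L[𝕜] E) (B : F →L[𝕜] F) (x : E × F) :
    upperTriangular A Y B x = (A x.1 + Y x.2, B x.2) := rfl

@[simp]
lemma upperRight_upperTriangular (A : E →L[𝕜] E) (Y : F →L[𝕜] E) (B : F →L[𝕜] F) :
    upperRight (upperTriangular A Y B) = Y := by
  ext; simp [upperRight]

lemma upperTriangular_mul (A A' : E →L[𝕜] E) (Y Y' : F →L[𝕜] E) (B B' : F →L[𝕜] F) :
    upperTriangular A Y B * upperTriangular A' Y' B'
      = upperTriangular (A * A') (A ∘L Y' + Y ∘L B') (B * B') := by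
  ext <;> simp

lemma upperTriangular_add (A A' : E →L[𝕜] E) (Y Y' : F →L[𝕜] E) (B B' : F →L[𝕜] F) :
    upperTriangular A Y B + upperTriangular A' Y' B'
      = upperTriangular (A + A') (Y + Y') (B + B') := by
  ext <;> simp

lemma algebraMap_eq_upperTriangular (a : 𝕜) :
    algebraMap 𝕜 (E × F →L[𝕜] E × F) a
      = upperTriangular (algebraMap 𝕜 _ a) 0 (algebraMap 𝕜 _ a) := by
  ext <;> simp

lemma norm_upperTriangular_le (A : E →L[𝕜] E) (Y : F →L[𝕜] E) (B : F →L[𝕜] F) :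
    ‖upperTriangular A Y B‖ ≤ ‖A‖ + ‖Y‖ + ‖B‖ := by
  rw [upperTriangular, opNorm_prod, Prod.norm_def, max_le_iff]
  constructor
  · calc ‖A ∘L fst 𝕜 E F + Y ∘L snd 𝕜 E F‖ ≤ ‖A‖ * 1 + ‖Y‖ * 1 :=
          (norm_add_le _ _).trans <| add_le_add
            ((opNorm_comp_le _ _).trans (by gcongr; exact norm_fst_le ..))
            ((opNorm_comp_le _ _).trans (by gcongr; exact norm_snd_le ..))
      _ ≤ ‖A‖ + ‖Y‖ + ‖B‖ := by simp
  · calc ‖B ∘L snd 𝕜 E F‖ ≤ ‖B‖ * 1 := (opNorm_comp_le _ _).trans (by gcongr; exact norm_snd_le ..)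
      _ ≤ ‖A‖ + ‖Y‖ + ‖B‖ := by simp [add_nonneg]

variable {T₁ : E →L[𝕜] E} {X : F →L[𝕜] E} {T₂ : F →L[𝕜] F}

lemma aeval_upperTriangular (p : 𝕜[X]) :
    aeval (upperTriangular T₁ X T₂) p
      = upperTriangular (aeval T₁ p) (upperRight (aeval (upperTriangular T₁ X T₂) p))
          (aeval T₂ p) := by
  suffices ∃ Y, aeval (upperTriangular T₁ X T₂) p = upperTriangular (aeval T₁ p) Y (aeval T₂ p) by
    obtain ⟨Y, hY⟩ := this
    rw [hY, upperRight_upperTriangular]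
  induction p using Polynomial.induction_on with
  | C a => exact ⟨0, by simp only [aeval_C, algebraMap_eq_upperTriangular]⟩
  | add p q hp hq =>
    obtain ⟨Y, hY⟩ := hp
    obtain ⟨Y', hY'⟩ := hq
    exact ⟨Y + Y', by rw [map_add, map_add, map_add, hY, hY', upperTriangular_add]⟩
  | monomial n a h =>
    obtain ⟨Y, hY⟩ := h
    refine ⟨aeval T₁ (C a * Polynomial.X ^ n) ∘L X + Y ∘L T₂, ?_⟩
    rw [pow_succ, ← mul_assoc]
    generalize C a * Polynomial.X ^ n = q at hY ⊢
    simp only [map_mul, aeval_X, hY, upperTriangular_mul]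

lemma upperRight_add (M M' : E × F →L[𝕜] E × F) :
    upperRight (M + M') = upperRight M + upperRight M' := by
  ext; simp [upperRight]

lemma upperRight_aeval_mul (p q : 𝕜[X]) :
    upperRight (aeval (upperTriangular T₁ X T₂) (p * q))
      = aeval T₁ p ∘L upperRight (aeval (upperTriangular T₁ X T₂) q)
        + upperRight (aeval (upperTriangular T₁ X T₂) p) ∘L aeval T₂ q := by
  conv_lhs => rw [map_mul, aeval_upperTriangular p, aeval_upperTriangular q]
  rw [upperTriangular_mul, upperRight_upperTriangular]

lemma upperRight_aeval_C (a : 𝕜) : upperRight (aeval (upperTriangular T₁ X T₂) (C a)) = 0 := by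
  rw [aeval_C, algebraMap_eq_upperTriangular, upperRight_upperTriangular]

lemma upperRight_aeval_X :
    upperRight (aeval (upperTriangular T₁ X T₂) (Polynomial.X : 𝕜[X])) = X := by
  rw [aeval_X, upperRight_upperTriangular]

lemma upperRight_aeval_eq_divX_left (p : 𝕜[X]) :
    upperRight (aeval (upperTriangular T₁ X T₂) p)
      = T₁ ∘L upperRight (aeval (upperTriangular T₁ X T₂) p.divX) + X ∘L aeval T₂ p.divX := by
  conv_lhs => rw [← X_mul_divX_add p]
  rw [map_add, upperRight_add, upperRight_aeval_mul, upperRight_aeval_C,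
    upperRight_aeval_X, aeval_X, add_zero]

lemma upperRight_aeval_eq_divX_right (p : 𝕜[X]) :
    upperRight (aeval (upperTriangular T₁ X T₂) p)
      = aeval T₁ p.divX ∘L X + upperRight (aeval (upperTriangular T₁ X T₂) p.divX) ∘L T₂ := by
  conv_lhs => rw [← divX_mul_X_add p]
  rw [map_add, upperRight_add, upperRight_aeval_mul, upperRight_aeval_C,
    upperRight_aeval_X, aeval_X, add_zero]

lemma upperRight_aeval_eq_sum_left (p : 𝕜[X]) (n : ℕ) :
    upperRight (aeval (upperTriangular T₁ X T₂) p)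
      = ∑ j ∈ range n, (T₁ ^ j) ∘L X ∘L aeval T₂ (divX^[j + 1] p)
        + (T₁ ^ n) ∘L upperRight (aeval (upperTriangular T₁ X T₂) (divX^[n] p)) := by
  induction n with
  | zero => simp [one_def]
  | succ n ih =>
    rw [ih, upperRight_aeval_eq_divX_left (divX^[n] p), comp_add, sum_range_succ,
      Function.iterate_succ_apply', pow_succ, mul_def, comp_assoc]
    abel

lemma upperRight_aeval_eq_sum_right (p : 𝕜[X]) (n : ℕ) :
    upperRight (aeval (upperTriangular T₁ X T₂) p)
      = ∑ i ∈ range n, aeval T₁ (divX^[i + 1] p) ∘L X ∘L (T₂ ^ i)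
        + upperRight (aeval (upperTriangular T₁ X T₂) (divX^[n] p)) ∘L (T₂ ^ n) := by
  induction n with
  | zero => simp [one_def]
  | succ n ih =>
    rw [ih, upperRight_aeval_eq_divX_right (divX^[n] p), add_comp, sum_range_succ,
      Function.iterate_succ_apply', pow_succ', mul_def, comp_assoc, comp_assoc, add_assoc]

lemma pow_comp_aeval_eq (T : E →L[𝕜] E) (n : ℕ) (q : 𝕜[X]) :
    (T ^ n) ∘L aeval T q = aeval T q ∘L (T ^ n) := by
  simpa only [map_mul, map_pow, aeval_X, mul_def] using
    congrArg (aeval T) (mul_comm (Polynomial.X ^ n) q)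

lemma pow_comp_upperRight_aeval_comp_pow {N : ℕ} (hX : (T₁ ^ N).comp (X.comp (T₂ ^ N)) = 0)
    (p : 𝕜[X]) :
    (T₁ ^ N) ∘L upperRight (aeval (upperTriangular T₁ X T₂) p) ∘L (T₂ ^ N) = 0 := by
  induction p using Polynomial.induction_on with
  | C a => rw [upperRight_aeval_C, zero_comp, comp_zero]
  | add p q hp hq => rw [map_add, upperRight_add, add_comp, comp_add, hp, hq, add_zero]
  | monomial n a ih =>
    rw [pow_succ, ← mul_assoc, upperRight_aeval_mul, upperRight_aeval_X, aeval_X]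
    generalize C a * Polynomial.X ^ n = q at ih ⊢
    have hleft : (T₁ ^ N) ∘L (aeval T₁ q ∘L X) ∘L (T₂ ^ N) = 0 := by
      rw [comp_assoc, ← comp_assoc, pow_comp_aeval_eq, comp_assoc, hX, comp_zero]
    have hright : (T₁ ^ N) ∘L (upperRight (aeval (upperTriangular T₁ X T₂) q) ∘L T₂) ∘L (T₂ ^ N)
        = 0 := by
      rw [comp_assoc, ← mul_def T₂, ← pow_mul_comm', mul_def]
      simpa only [comp_assoc, zero_comp] using congrArg (· ∘L T₂) ih
    rw [add_comp, comp_add, hleft, hright, add_zero]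

lemma upperRight_aeval_eq_sum {N : ℕ} (hX : (T₁ ^ N).comp (X.comp (T₂ ^ N)) = 0) (p : 𝕜[X]) :
    upperRight (aeval (upperTriangular T₁ X T₂) p)
      = ∑ j ∈ range N, (T₁ ^ j) ∘L X ∘L aeval T₂ (divX^[j + 1] p)
        + ∑ i ∈ range N, (T₁ ^ N) ∘L aeval T₁ (divX^[i + 1 + N] p) ∘L X ∘L (T₂ ^ i) := by
  rw [upperRight_aeval_eq_sum_left p N, upperRight_aeval_eq_sum_right (divX^[N] p) N,
    comp_add, pow_comp_upperRight_aeval_comp_pow hX, add_zero, comp_finsetSum]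
  simp only [Function.iterate_add_apply]

end Triangular

section UnitDisc

open Metric

lemma Polynomial.iteratedDeriv_eval {𝕜 : Type*} [NontriviallyNormedField 𝕜] (p : 𝕜[X]) (n : ℕ) :
    iteratedDeriv n (fun z => p.eval z) = fun z => (derivative^[n] p).eval z := by
  induction n with
  | zero => rfl
  | succ n ih =>
    rw [iteratedDeriv_succ, ih, Function.iterate_succ_apply']
    ext z
    exact Polynomial.deriv _

lemma Polynomial.norm_coeff_le_of_forall_mem_sphere {p : ℂ[X]} {B : ℝ}
    (hB : ∀ z ∈ sphere (0 : ℂ) 1, ‖p.eval z‖ ≤ B) (n : ℕ) : ‖p.coeff n‖ ≤ B := by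
  have hcauchy := Complex.norm_iteratedDeriv_le_of_forall_mem_sphere_norm_le n one_pos
    p.differentiable.diffContOnCl hB
  rw [p.iteratedDeriv_eval] at hcauchy
  dsimp only at hcauchy
  rw [← coeff_zero_eq_eval_zero, coeff_iterate_derivative, zero_add, Nat.descFactorial_self,
    nsmul_eq_mul, norm_mul, one_pow, div_one, Complex.norm_natCast] at hcauchy
  exact le_of_mul_le_mul_left hcauchy (by positivity)

lemma Polynomial.norm_eval_le_of_forall_mem_sphere {p : ℂ[X]} {B : ℝ}
    (hB : ∀ z ∈ sphere (0 : ℂ) 1, ‖p.eval z‖ ≤ B) {z : ℂ} (hz : ‖z‖ ≤ 1) : ‖p.eval z‖ ≤ B := by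
  refine Complex.norm_le_of_forall_mem_frontier_norm_le (U := ball 0 1) isBounded_ball
    p.differentiable.diffContOnCl (fun w hw => hB w ?_) ?_
  · rwa [frontier_ball _ one_ne_zero] at hw
  · rwa [closure_ball _ one_ne_zero, mem_closedBall_zero_iff]

lemma Polynomial.X_pow_mul_divX_iterate_add {R : Type*} [Semiring R] (p : R[X]) (m : ℕ) :
    Polynomial.X ^ m * divX^[m] p + ∑ k ∈ range m, C (p.coeff k) * Polynomial.X ^ k = p := by
  induction m generalizing p with
  | zero => simp
  | succ m ih =>
    conv_rhs => rw [← X_mul_divX_add p, ← ih p.divX]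
    rw [Function.iterate_succ_apply, sum_range_succ', pow_succ', mul_assoc]
    simp only [coeff_divX, mul_add, mul_sum, pow_succ', X_mul, mul_assoc, pow_zero, mul_one,
      add_assoc]

lemma Polynomial.norm_eval_divX_iterate_le {p : ℂ[X]} {B : ℝ}
    (hB : ∀ z : ℂ, ‖z‖ ≤ 1 → ‖p.eval z‖ ≤ B) (m : ℕ) {z : ℂ} (hz : ‖z‖ ≤ 1) :
    ‖(divX^[m] p).eval z‖ ≤ (m + 1) * B := by
  have hsphere : ∀ w ∈ sphere (0 : ℂ) 1, ‖w‖ = 1 := fun w => mem_sphere_zero_iff_norm.1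
  have hcoeff : ∀ k, ‖p.coeff k‖ ≤ B :=
    norm_coeff_le_of_forall_mem_sphere fun w hw => hB w (hsphere w hw).le
  refine norm_eval_le_of_forall_mem_sphere (fun w hw => ?_) hz
  have hsplit := congrArg (eval w) (p.X_pow_mul_divX_iterate_add m)
  simp only [eval_add, eval_mul, eval_pow, eval_X, eval_C, eval_finsetSum] at hsplit
  calc ‖(divX^[m] p).eval w‖ = ‖w ^ m * (divX^[m] p).eval w‖ := by
        rw [norm_mul, norm_pow, hsphere w hw, one_pow, one_mul]
    _ = ‖p.eval w - ∑ k ∈ range m, p.coeff k * w ^ k‖ := by rw [← hsplit, add_sub_cancel_right]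
    _ ≤ ‖p.eval w‖ + ∑ k ∈ range m, ‖p.coeff k * w ^ k‖ :=
        (norm_sub_le _ _).trans (add_le_add_right (norm_sum_le _ _) _)
    _ ≤ B + ∑ k ∈ range m, B := by
        gcongr with k
        · exact hB w (hsphere w hw).le
        · rw [norm_mul, norm_pow, hsphere w hw, one_pow, mul_one]
          exact hcoeff k
    _ = (m + 1) * B := by rw [sum_const, card_range, nsmul_eq_mul]; ring

end UnitDisc

section PolynomiallyBounded

variable {E : Type*} [NormedAddCommGroup E] [NormedSpace ℂ E]

def PolynomiallyBoundedWith (C : ℝ) (T : E →L[ℂ] E) : Prop :=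
  ∀ (p : Polynomial ℂ) (B : ℝ),
    (∀ z : ℂ, ‖z‖ ≤ 1 → ‖Polynomial.eval z p‖ ≤ B) → ‖(Polynomial.aeval T p : E →L[ℂ] E)‖ ≤ C * B

namespace PolynomiallyBoundedWith

variable {C : ℝ} {T : E →L[ℂ] E}

lemma norm_pow_le (h : PolynomiallyBoundedWith C T) (n : ℕ) : ‖T ^ n‖ ≤ C := by
  simpa using h (Polynomial.X ^ n) 1 fun z hz => by simpa using pow_le_one₀ (norm_nonneg z) hz

lemma nonneg (h : PolynomiallyBoundedWith C T) : 0 ≤ C :=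
  (norm_nonneg _).trans (h.norm_pow_le 0)

lemma norm_aeval_divX_iterate_le (h : PolynomiallyBoundedWith C T) {p : ℂ[X]} {B : ℝ}
    (hB : ∀ z : ℂ, ‖z‖ ≤ 1 → ‖p.eval z‖ ≤ B) (m : ℕ) :
    ‖aeval T (divX^[m] p)‖ ≤ C * ((m + 1) * B) :=
  h _ _ fun _ hz => norm_eval_divX_iterate_le hB m hz

end PolynomiallyBoundedWith

end PolynomiallyBounded

section BlockBound

variable {E F : Type*} [NormedAddCommGroup E] [NormedSpace ℂ E] [NormedAddCommGroup F]
  [NormedSpace ℂ F] {T₁ : E →L[ℂ] E} {X : F →L[ℂ] E} {T₂ : F →L[ℂ] F} {C₁ C₂ : ℝ}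

lemma norm_upperRight_aeval_le (h₁ : PolynomiallyBoundedWith C₁ T₁)
    (h₂ : PolynomiallyBoundedWith C₂ T₂) {N : ℕ} (hX : (T₁ ^ N).comp (X.comp (T₂ ^ N)) = 0)
    {p : ℂ[X]} {B : ℝ} (hB : ∀ z : ℂ, ‖z‖ ≤ 1 → ‖p.eval z‖ ≤ B) :
    ‖upperRight (aeval (upperTriangular T₁ X T₂) p)‖
      ≤ N * (2 * N + 1) * (C₁ * C₂ * ‖X‖ * (1 + C₁)) * B := by
  have hB₀ : 0 ≤ B := (norm_nonneg _).trans (hB 0 (by simp))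
  have hC₁ := h₁.nonneg
  have hC₂ := h₂.nonneg
  have hleft : ∀ j ∈ range N, ‖(T₁ ^ j) ∘L X ∘L aeval T₂ (divX^[j + 1] p)‖
      ≤ C₁ * (‖X‖ * (C₂ * ((2 * N + 1) * B))) := by
    intro j hj
    have hjN : ((j + 1 : ℕ) : ℝ) + 1 ≤ 2 * N + 1 := by
      have := mem_range.1 hj; norm_cast; omega
    calc _ ≤ ‖T₁ ^ j‖ * (‖X‖ * ‖aeval T₂ (divX^[j + 1] p)‖) :=
          (opNorm_comp_le _ _).trans (by gcongr; exact opNorm_comp_le _ _)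
      _ ≤ C₁ * (‖X‖ * (C₂ * (((j + 1 : ℕ) + 1) * B))) := by
          gcongr
          exacts [h₁.norm_pow_le j, h₂.norm_aeval_divX_iterate_le hB _]
      _ ≤ C₁ * (‖X‖ * (C₂ * ((2 * N + 1) * B))) := by gcongr
  have hright : ∀ i ∈ range N, ‖(T₁ ^ N) ∘L aeval T₁ (divX^[i + 1 + N] p) ∘L X ∘L (T₂ ^ i)‖
      ≤ C₁ * (C₁ * ((2 * N + 1) * B) * (‖X‖ * C₂)) := by
    intro i hi
    have hiN : ((i + 1 + N : ℕ) : ℝ) + 1 ≤ 2 * N + 1 := by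
      have := mem_range.1 hi; norm_cast; omega
    calc _ ≤ ‖T₁ ^ N‖ * (‖aeval T₁ (divX^[i + 1 + N] p)‖ * (‖X‖ * ‖T₂ ^ i‖)) :=
          (opNorm_comp_le _ _).trans <| by
            gcongr
            exact (opNorm_comp_le _ _).trans (by gcongr; exact opNorm_comp_le _ _)
      _ ≤ C₁ * (C₁ * (((i + 1 + N : ℕ) + 1) * B) * (‖X‖ * C₂)) := by
          gcongr
          exacts [h₁.norm_pow_le N, h₁.norm_aeval_divX_iterate_le hB _, h₂.norm_pow_le i]
      _ ≤ C₁ * (C₁ * ((2 * N + 1) * B) * (‖X‖ * C₂)) := by gcongr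
  rw [upperRight_aeval_eq_sum hX]
  refine (norm_add_le _ _).trans ?_
  refine (add_le_add ((norm_sum_le _ _).trans (sum_le_card_nsmul _ _ _ hleft))
    ((norm_sum_le _ _).trans (sum_le_card_nsmul _ _ _ hright))).trans_eq ?_
  rw [card_range, nsmul_eq_mul, nsmul_eq_mul]
  ring

lemma PolynomiallyBoundedWith.upperTriangular (h₁ : PolynomiallyBoundedWith C₁ T₁)
    (h₂ : PolynomiallyBoundedWith C₂ T₂) {N : ℕ} (hX : (T₁ ^ N).comp (X.comp (T₂ ^ N)) = 0) :
    PolynomiallyBoundedWith (C₁ + N * (2 * N + 1) * (C₁ * C₂ * ‖X‖ * (1 + C₁)) + C₂)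
      (upperTriangular T₁ X T₂) := by
  intro p B hB
  rw [aeval_upperTriangular]
  calc _ ≤ _ := norm_upperTriangular_le _ _ _
    _ ≤ C₁ * B + N * (2 * N + 1) * (C₁ * C₂ * ‖X‖ * (1 + C₁)) * B + C₂ * B :=
        add_le_add (add_le_add (h₁ p B hB) (norm_upperRight_aeval_le h₁ h₂ hX hB)) (h₂ p B hB)
    _ = _ := by ring

end BlockBound

theorem stmt_10_general {H₁ H₂ : Type*}
    [NormedAddCommGroup H₁] [InnerProductSpace ℂ H₁]
    [NormedAddCommGroup H₂] [InnerProductSpace ℂ H₂]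
    (T₁ : H₁ →L[ℂ] H₁) (T₂ : H₂ →L[ℂ] H₂) (X : H₂ →L[ℂ] H₁)
    (h₁ : PolynomiallyBounded T₁) (h₂ : PolynomiallyBounded T₂)
    (N : ℕ) (hX : (T₁ ^ N).comp (X.comp (T₂ ^ N)) = 0) :
    PolynomiallyBounded
      (((T₁.comp (ContinuousLinearMap.fst ℂ H₁ H₂) +
          X.comp (ContinuousLinearMap.snd ℂ H₁ H₂))).prod
        (T₂.comp (ContinuousLinearMap.snd ℂ H₁ H₂))) := by
  obtain ⟨C₁, hC₁, h₁⟩ := h₁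
  obtain ⟨C₂, hC₂, h₂⟩ := h₂
  exact ⟨_, by positivity, PolynomiallyBoundedWith.upperTriangular h₁ h₂ hX⟩

/-- If `T₁, T₂` are polynomially bounded and `T₁^N X T₂^N = 0` for some `N`, then the
upper-triangular block operator `[[T₁, X], [0, T₂]]` is polynomially bounded. -/
theorem stmt_10 {H₁ H₂ : Type*}
    [NormedAddCommGroup H₁] [InnerProductSpace ℂ H₁] [CompleteSpace H₁]
    [NormedAddCommGroup H₂] [InnerProductSpace ℂ H₂] [CompleteSpace H₂]
    (T₁ : H₁ →L[ℂ] H₁) (T₂ : H₂ →L[ℂ] H₂) (X : H₂ →L[ℂ] H₁)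
    (h₁ : PolynomiallyBounded T₁) (h₂ : PolynomiallyBounded T₂)
    (N : ℕ) (hX : (T₁ ^ N).comp (X.comp (T₂ ^ N)) = 0) :
    PolynomiallyBounded
      (((T₁.comp (ContinuousLinearMap.fst ℂ H₁ H₂) +
          X.comp (ContinuousLinearMap.snd ℂ H₁ H₂))).prod
        (T₂.comp (ContinuousLinearMap.snd ℂ H₁ H₂))) :=
  stmt_10_general T₁ T₂ X h₁ h₂ N hX
end

section
/- Let A, B ∈ B(H) and suppose there exists an idempotent E ∈ B(H) (E² = E, E ≠ 0) with AB - BA = E. If H is infinite dimensional, then the kernel of E is infinite dimensional; equivalently, a nonzero idempotent with finite-dimensional kernel on an infinite-dimensional Hilbert space cannot be a commutator. -/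
/-!
Modulo the compact operators the hypothesis reads `ab - ba = 1`, because `1 - E` has finite rank
(its range is `ker E`). Wielandt's argument works for any submultiplicative seminorm `p`: since
`a b^(n+1) - b^(n+1) a ≡ (n+1) b^n`, we get `(n+1) p(b^n) ≤ 2 p(a) p(b^(n+1)) ≤ 2 p(a) p(b) p(b^n)`,
so `p(b^n) = 0` for large `n`, and descending through the first inequality gives `p(1) = 0`.
For the quotient seminorm of the (closed) ideal of compact operators this says that the identity
is compact, which forces `H` to be finite dimensional.
-/

theorem mul_pow_sub_pow_mul_sub_nsmul_succ {R : Type*} [Ring R] (a b : R) (n : ℕ) :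
    a * b ^ (n + 2) - b ^ (n + 2) * a - (n + 2) • b ^ (n + 1) =
      (a * b ^ (n + 1) - b ^ (n + 1) * a - (n + 1) • b ^ n) * b +
        b ^ (n + 1) * (a * b - b * a - 1) := by
  simp only [sub_mul, mul_sub, add_mul, add_smul, one_smul, smul_mul_assoc, pow_succ, mul_assoc,
    mul_one]
  abel

namespace Seminorm

variable {𝕜 R : Type*} [RCLike 𝕜] [Ring R] [Module 𝕜 R] (p : Seminorm 𝕜 R)

theorem map_nsmul (n : ℕ) (x : R) : p (n • x) = n * p x := by
  rw [← Nat.cast_smul_eq_nsmul 𝕜, map_smul_eq_mul, RCLike.norm_natCast]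

theorem map_mul_pow_sub_pow_mul_sub_nsmul_eq_zero (hmul : ∀ x y, p (x * y) ≤ p x * p y)
    {a b : R} (hab : p (a * b - b * a - 1) = 0) (n : ℕ) :
    p (a * b ^ (n + 1) - b ^ (n + 1) * a - (n + 1) • b ^ n) = 0 := by
  induction n with
  | zero => simpa using hab
  | succ n ih =>
    refine le_antisymm ?_ (apply_nonneg p _)
    calc _ = p ((a * b ^ (n + 1) - b ^ (n + 1) * a - (n + 1) • b ^ n) * b +
            b ^ (n + 1) * (a * b - b * a - 1)) := by
          rw [← mul_pow_sub_pow_mul_sub_nsmul_succ]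
      _ ≤ p (a * b ^ (n + 1) - b ^ (n + 1) * a - (n + 1) • b ^ n) * p b +
            p (b ^ (n + 1)) * p (a * b - b * a - 1) :=
          (map_add_le_add p _ _).trans (add_le_add (hmul _ _) (hmul _ _))
      _ = 0 := by rw [ih, hab]; ring

theorem map_one_eq_zero_of_map_commutator_sub_one_eq_zero (hmul : ∀ x y, p (x * y) ≤ p x * p y)
    {a b : R} (hab : p (a * b - b * a - 1) = 0) : p 1 = 0 := by
  have hdown (n : ℕ) : (n + 1) * p (b ^ n) ≤ 2 * p a * p (b ^ (n + 1)) := by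
    set c := a * b ^ (n + 1) - b ^ (n + 1) * a
    calc (n + 1) * p (b ^ n) = p (c - (c - (n + 1) • b ^ n)) := by
          rw [sub_sub_cancel, map_nsmul]; push_cast; rfl
      _ ≤ p c + p (c - (n + 1) • b ^ n) := map_sub_le_add p _ _
      _ ≤ p a * p (b ^ (n + 1)) + p (b ^ (n + 1)) * p a := by
          rw [map_mul_pow_sub_pow_mul_sub_nsmul_eq_zero p hmul hab, add_zero]
          exact (map_sub_le_add p _ _).trans (add_le_add (hmul _ _) (hmul _ _))
      _ = 2 * p a * p (b ^ (n + 1)) := by ring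
  obtain ⟨N, hN⟩ := exists_nat_gt (2 * p a * p b)
  have hpowN : p (b ^ N) = 0 := by
    have h := (hdown N).trans
      (mul_le_mul_of_nonneg_left (pow_succ b N ▸ hmul (b ^ N) b) (by positivity))
    nlinarith [apply_nonneg p (b ^ N)]
  suffices ∀ n, p (b ^ n) = 0 → p 1 = 0 from this N hpowN
  intro n
  induction n with
  | zero => simp
  | succ n ih =>
    intro hn
    refine ih (le_antisymm ?_ (apply_nonneg p _))
    have h := hdown n
    rw [hn, mul_zero] at h
    nlinarith [apply_nonneg p (b ^ n)]

end Seminorm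

namespace Submodule

variable {𝕜 R : Type*} [NormedField 𝕜] [SeminormedRing R] [NormedSpace 𝕜 R] (S : Submodule 𝕜 R)

noncomputable def quotientSeminorm : Seminorm 𝕜 R :=
  (normSeminorm 𝕜 (R ⧸ S)).comp S.mkQ

theorem quotientSeminorm_apply (x : R) : S.quotientSeminorm x = ‖S.mkQ x‖ := rfl

theorem quotientSeminorm_mul_le (hleft : ∀ x y, y ∈ S → x * y ∈ S)
    (hright : ∀ x y, x ∈ S → x * y ∈ S) (x y : R) :
    S.quotientSeminorm (x * y) ≤ S.quotientSeminorm x * S.quotientSeminorm y := by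
  refine le_mul_of_forall_lt₀ fun r hr s hs => ?_
  obtain ⟨x', hx', hx'r⟩ := QuotientAddGroup.norm_lt_iff.mp hr
  obtain ⟨y', hy', hy's⟩ := QuotientAddGroup.norm_lt_iff.mp hs
  have hx : x' - x ∈ S := (Quotient.eq S).mp hx'
  have hy : y' - y ∈ S := (Quotient.eq S).mp hy'
  have hmk : S.mkQ (x * y) = S.mkQ (x' * y') := by
    refine (Quotient.eq S).mpr ?_
    have : x * y - x' * y' = -((x' - x) * y + x' * (y' - y)) := by noncomm_ring
    rw [this]
    exact S.neg_mem (S.add_mem (hright _ _ hx) (hleft _ _ hy))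
  calc S.quotientSeminorm (x * y) = ‖S.mkQ (x' * y')‖ := by rw [quotientSeminorm_apply, hmk]
    _ ≤ ‖x' * y'‖ := Quotient.norm_mk_le S _
    _ ≤ ‖x'‖ * ‖y'‖ := norm_mul_le _ _
    _ ≤ r * s := mul_le_mul hx'r.le hy's.le (norm_nonneg _) ((norm_nonneg _).trans hx'r.le)

theorem quotientSeminorm_eq_zero_iff (hS : IsClosed (S : Set R)) (x : R) :
    S.quotientSeminorm x = 0 ↔ x ∈ S := by
  refine QuotientAddGroup.norm_mk_eq_zero_iff_mem_closure.trans ?_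
  rw [coe_toAddSubgroup, hS.closure_eq]
  rfl

end Submodule

theorem IsCompactOperator.of_finiteDimensional_range {𝕜 E F : Type*} [NontriviallyNormedField 𝕜]
    [ProperSpace 𝕜] [NormedAddCommGroup E] [NormedSpace 𝕜 E] [NormedAddCommGroup F]
    [NormedSpace 𝕜 F] (T : E →L[𝕜] F) [FiniteDimensional 𝕜 (LinearMap.range (T : E →ₗ[𝕜] F))] :
    IsCompactOperator T :=
  have : ProperSpace (LinearMap.range (T : E →ₗ[𝕜] F)) := FiniteDimensional.proper 𝕜 _
  (isCompactOperator_of_locallyCompactSpace_dom T.rangeRestrict).continuous_comp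
    continuous_subtype_val

section CompactOperator

variable {𝕜 E : Type*} [RCLike 𝕜] [NormedAddCommGroup E] [NormedSpace 𝕜 E]

theorem compactOperator_quotientSeminorm_mul_le (X Y : E →L[𝕜] E) :
    (compactOperator (RingHom.id 𝕜) E E).quotientSeminorm (X * Y) ≤
      (compactOperator (RingHom.id 𝕜) E E).quotientSeminorm X *
        (compactOperator (RingHom.id 𝕜) E E).quotientSeminorm Y :=
  Submodule.quotientSeminorm_mul_le _ (fun X _ hY => (hY : IsCompactOperator _).clm_comp X)
    (fun _ Y hX => (hX : IsCompactOperator _).comp_clm Y) X Y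

theorem FiniteDimensional.of_isCompactOperator_one_sub_commutator [CompleteSpace E]
    (A B : E →L[𝕜] E) (h : IsCompactOperator ⇑(1 - (A * B - B * A))) :
    FiniteDimensional 𝕜 E := by
  set K := compactOperator (RingHom.id 𝕜) E E
  have hK : IsClosed (K : Set (E →L[𝕜] E)) := isClosed_setOfPred_isCompactOperator
  have hone : K.quotientSeminorm 1 = 0 := by
    refine Seminorm.map_one_eq_zero_of_map_commutator_sub_one_eq_zero _
      compactOperator_quotientSeminorm_mul_le (a := A) (b := B) ?_
    rw [← neg_sub, map_neg_eq_map, K.quotientSeminorm_eq_zero_iff hK]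
    exact h
  exact .of_isCompactOperator_id ((K.quotientSeminorm_eq_zero_iff hK 1).mp hone)

end CompactOperator

theorem stmt_16_general {H : Type*} [NormedAddCommGroup H] [InnerProductSpace ℂ H]
    [CompleteSpace H] (hinf : ¬ FiniteDimensional ℂ H)
    (A B E : H →L[ℂ] H) (hE : E * E = E)
    (hcomm : A * B - B * A = E) :
    ¬ FiniteDimensional ℂ (LinearMap.ker (E : H →ₗ[ℂ] H)) := by
  intro hker
  have hidem : IsIdempotentElem (E : H →ₗ[ℂ] H) :=
    ContinuousLinearMap.isIdempotentElem_toLinearMap_iff.mpr hE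
  have : FiniteDimensional ℂ (LinearMap.range ((1 - E : H →L[ℂ] H) : H →ₗ[ℂ] H)) := by
    rwa [ContinuousLinearMap.toLinearMap_sub, ContinuousLinearMap.toLinearMap_one,
      ← LinearMap.IsIdempotentElem.ker_eq_range_one_sub hidem]
  rw [← hcomm] at this
  exact hinf (.of_isCompactOperator_one_sub_commutator A B
    (IsCompactOperator.of_finiteDimensional_range _))

/-- On an infinite-dimensional Hilbert space, a nonzero idempotent that is a commutator
must have infinite-dimensional kernel. -/
theorem stmt_16 {H : Type*} [NormedAddCommGroup H] [InnerProductSpace ℂ H]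
    [CompleteSpace H] (hinf : ¬ FiniteDimensional ℂ H)
    (A B E : H →L[ℂ] H) (hE : E * E = E) (hE0 : E ≠ 0)
    (hcomm : A * B - B * A = E) :
    ¬ FiniteDimensional ℂ (LinearMap.ker (E : H →ₗ[ℂ] H)) :=
  stmt_16_general hinf A B E hE hcomm
end
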